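/- arXiv:2305.06478 — 9 statements merged into one kernel-verified Lean document; each statement's English description precedes it below -/
import Mathlib

section
/- With B = (S·A_tx) ⊙ A_rx the sensing matrix of the active sensing setup and N_s = rank(S), one has krank(B) ≤ min(N_s·N_rx, N_Σ), where N_Σ is the number of elements of the sum co-array. -/
/-- The Kruskal rank of a complex matrix `M`: the largest integer `r` such that
every set of `r` columns of `M` is linearly independent. -/
noncomputable def krank {m n : Type*} [Fintype m] [Fintype n] (M : Matrix m n ℂ) : ℕ :=
  sSup {r : ℕ | r ≤ Fintype.card n ∧
    ∀ s : Finset n, s.card = r → LinearIndependent ℂ (fun j : s => M.transpose (j : n))}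

/-- The Khatri-Rao (columnwise Kronecker) product. -/
def khatriRao {p q V : Type*} (A : Matrix p V ℂ) (B : Matrix q V ℂ) :
    Matrix (p × q) V ℂ :=
  Matrix.of fun nm i => A nm.1 i * B nm.2 i

open Matrix Submodule Module

lemma aux_rank_le_card_of_rows_mem_span {μ : Type*} [Fintype μ] {V : ℕ} {ι : Type*} [Fintype ι]
    (M : Matrix μ (Fin V) ℂ) (v : ι → (Fin V → ℂ))
    (h : ∀ t, M t ∈ Submodule.span ℂ (Set.range v)) :
    M.rank ≤ Fintype.card ι := by
  rw [Matrix.rank_eq_finrank_span_row]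
  have h2 : Submodule.span ℂ (Set.range M) ≤ Submodule.span ℂ (Set.range v) := by
    rw [Submodule.span_le]
    rintro _ ⟨t, rfl⟩
    exact h t
  exact (Submodule.finrank_mono h2).trans (finrank_range_le_card v)

lemma aux_krank_le_rank {μ : Type*} [Fintype μ] {V : ℕ} (M : Matrix μ (Fin V) ℂ) :
    krank M ≤ M.rank := by
  apply csSup_le
  · refine ⟨0, Nat.zero_le _, ?_⟩
    intro s hs
    rw [Finset.card_eq_zero] at hs
    subst hs
    exact linearIndependent_empty_type
  · rintro r ⟨hrV, hli⟩
    obtain ⟨s, -, hcard⟩ := Finset.exists_subset_card_eq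
      (show r ≤ (Finset.univ : Finset (Fin V)).card by simpa using hrV)
    have h2 : Submodule.span ℂ (Set.range (fun j : s => M.transpose (j : Fin V))) ≤
        Submodule.span ℂ (Set.range M.transpose) := by
      apply Submodule.span_mono
      rintro _ ⟨j, rfl⟩
      exact ⟨j, rfl⟩
    calc r = s.card := hcard.symm
      _ = Fintype.card s := (Fintype.card_coe s).symm
      _ = finrank ℂ (Submodule.span ℂ (Set.range fun j : s => M.transpose (j : Fin V))) :=
          (finrank_span_eq_card (hli s hcard)).symm
      _ ≤ finrank ℂ (Submodule.span ℂ (Set.range M.transpose)) := Submodule.finrank_mono h2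
      _ = M.rank := (Matrix.rank_eq_finrank_span_cols M).symm

/-- Kruskal-rank bound via Khatri–Rao structure: `(C ⊙ D).rank ≤ C.rank * q`. -/
lemma aux_khatriRao_rank_le {T q V : ℕ}
    (C : Matrix (Fin T) (Fin V) ℂ) (D : Matrix (Fin q) (Fin V) ℂ) :
    (khatriRao C D).rank ≤ C.rank * q := by
  set W : Submodule ℂ (Fin V → ℂ) := Submodule.span ℂ (Set.range C) with hW
  have hfin : finrank ℂ W = C.rank := (Matrix.rank_eq_finrank_span_row C).symm
  let b := Module.finBasis ℂ W
  let v : (Fin (finrank ℂ W) × Fin q) → (Fin V → ℂ) :=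
    fun km => fun i => ((b km.1 : Fin V → ℂ) i) * D km.2 i
  have h : ∀ tm, (khatriRao C D) tm ∈ Submodule.span ℂ (Set.range v) := by
    rintro ⟨t, m⟩
    have hCt : C t ∈ W := Submodule.subset_span ⟨t, rfl⟩
    set x : W := ⟨C t, hCt⟩ with hx
    have hrepr : (∑ k, b.repr x k • (b k : Fin V → ℂ)) = C t := by
      have := b.sum_repr x
      calc (∑ k, b.repr x k • (b k : Fin V → ℂ))
          = ((∑ k, b.repr x k • b k : W) : Fin V → ℂ) := by
            rw [Submodule.coe_sum]; simp
        _ = (x : Fin V → ℂ) := by rw [this]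
        _ = C t := rfl
    have heq : (khatriRao C D) (t, m) = ∑ k, b.repr x k • v (k, m) := by
      funext i
      have hCi : C t i = ∑ k, b.repr x k * (b k : Fin V → ℂ) i := by
        rw [← hrepr]
        simp [Finset.sum_apply]
      show C t i * D m i = _
      rw [hCi, Finset.sum_apply, Finset.sum_mul]
      apply Finset.sum_congr rfl
      intro k _
      simp [v, mul_assoc]
    rw [heq]
    exact Submodule.sum_mem _ fun k _ => Submodule.smul_mem _ _
      (Submodule.subset_span ⟨(k, m), rfl⟩)
  calc (khatriRao C D).rank ≤ Fintype.card (Fin (finrank ℂ W) × Fin q) :=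
        aux_rank_le_card_of_rows_mem_span _ v h
    _ = C.rank * q := by simp [hfin]

/-- `krank B ≤ min (N_s · N_rx) N_Σ` for the sensing matrix
`B = (S · A_tx) ⊙ A_rx`, where `N_s = rank S` and `N_Σ` is the size of the sum co-array. -/
theorem stmt_1 (Ntx Nrx T V Nsum : ℕ)
    (hNtx : 0 < Ntx) (hNrx : 0 < Nrx) (hT : 0 < T) (hV : 0 < V)
    (dtx : Fin Ntx → ℤ) (drx : Fin Nrx → ℤ)
    (hdtx0 : dtx ⟨0, hNtx⟩ = 0) (hdtxMono : StrictMono dtx)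
    (hdrx0 : drx ⟨0, hNrx⟩ = 0) (hdrxMono : StrictMono drx)
    (θ : Fin V → ℝ) (hθinj : Function.Injective θ)
    (hθrange : ∀ i, θ i ∈ Set.Ico (-(Real.pi / 2)) (Real.pi / 2))
    (Atx : Matrix (Fin Ntx) (Fin V) ℂ)
    (hAtx : ∀ n i, Atx n i =
      Complex.exp (Complex.I * Real.pi * (dtx n : ℂ) * (Real.sin (θ i) : ℂ)))
    (Arx : Matrix (Fin Nrx) (Fin V) ℂ)
    (hArx : ∀ m i, Arx m i =
      Complex.exp (Complex.I * Real.pi * (drx m : ℂ) * (Real.sin (θ i) : ℂ)))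
    (hNsum : Nsum = Set.ncard {z : ℤ | ∃ n m, dtx n + drx m = z})
    (S : Matrix (Fin T) (Fin Ntx) ℂ) :
    krank (khatriRao (S * Atx) Arx) ≤ min (S.rank * Nrx) Nsum := by
  have hkr := aux_krank_le_rank (khatriRao (S * Atx) Arx)
  refine le_min (hkr.trans ?_) (hkr.trans ?_)
  · -- bound 1 : rank ≤ S.rank * Nrx
    calc (khatriRao (S * Atx) Arx).rank ≤ (S * Atx).rank * Nrx :=
          aux_khatriRao_rank_le _ _
      _ ≤ S.rank * Nrx := Nat.mul_le_mul_right _ (Matrix.rank_mul_le_left S Atx)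
  · -- bound 2 : rank ≤ Nsum
    set Z : Set ℤ := {z : ℤ | ∃ n m, dtx n + drx m = z} with hZdef
    have hZr : Z = Set.range (fun p : Fin Ntx × Fin Nrx => dtx p.1 + drx p.2) := by
      ext z
      constructor
      · rintro ⟨n, m, rfl⟩; exact ⟨(n, m), rfl⟩
      · rintro ⟨⟨n, m⟩, rfl⟩; exact ⟨n, m, rfl⟩
    have hZfin : Z.Finite := hZr ▸ Set.finite_range _
    haveI := hZfin.fintype
    have hcard : Nsum = Fintype.card Z := by
      rw [hNsum, Set.ncard_eq_toFinset_card', Set.toFinset_card]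
    let e : Z → (Fin V → ℂ) := fun z => fun i =>
      Complex.exp (Complex.I * Real.pi * ((z : ℤ) : ℂ) * (Real.sin (θ i) : ℂ))
    have h : ∀ tm, (khatriRao (S * Atx) Arx) tm ∈ Submodule.span ℂ (Set.range e) := by
      rintro ⟨t, m⟩
      have heq : (khatriRao (S * Atx) Arx) (t, m) =
          ∑ n, S t n • e ⟨dtx n + drx m, ⟨n, m, rfl⟩⟩ := by
        funext i
        show (S * Atx) t i * Arx m i = _
        rw [Matrix.mul_apply, Finset.sum_mul, Finset.sum_apply]
        apply Finset.sum_congr rfl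
        intro n _
        have : Atx n i * Arx m i = e ⟨dtx n + drx m, ⟨n, m, rfl⟩⟩ i := by
          rw [hAtx, hArx]
          show _ = Complex.exp _
          rw [← Complex.exp_add]
          congr 1
          push_cast
          ring
        rw [mul_assoc, this]
        simp
      rw [heq]
      exact Submodule.sum_mem _ fun n _ => Submodule.smul_mem _ _
        (Submodule.subset_span ⟨_, rfl⟩)
    calc (khatriRao (S * Atx) Arx).rank ≤ Fintype.card Z :=
          aux_rank_le_card_of_rows_mem_span _ e h
      _ = Nsum := hcard.symm
end

section
/- In the active sensing setup with B = (S·A_tx) ⊙ A_rx and N_s = rank(S): if krank(B) = min(N_s·N_rx, N_Σ), then rank((S ⊗ I_{N_rx})·Υ) = min(N_s·N_rx, N_Σ), and equivalently the dimension of the intersection of the null space of the linear map x ↦ (S ⊗ I_{N_rx})·x on ℂ^{N_tx·N_rx} with the column space of Υ equals max(N_Σ − N_s·N_rx, 0). -/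
/-! The sensing matrix factors as `B = (S ⊗ I) · Υ · A_Σ`, where `A_Σ` is the manifold matrix of
the sum co-array: each entry of `Atx ⊙ Arx` is `exp (iπ (d_tx[n] + d_rx[m]) sin θ)`, and `Υ`
selects the co-array element `d_tx[n] + d_rx[m]`. Hence
`krank B ≤ rank B ≤ rank ((S ⊗ I) Υ) ≤ min (rank (S ⊗ I)) (rank Υ) ≤ min (N_s N_rx) N_Σ`,
and the hypothesis forces equality. Since every co-array element is attained, `Υ` contains an
identity submatrix and has full column rank `N_Σ`; rank–nullity for `S ⊗ I` restricted to the
column space of `Υ` then gives the dimension of `ker (S ⊗ I) ⊓ range Υ`. -/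

open scoped Kronecker

open Module

namespace Matrix

variable {K l m n p : Type*} [Field K]

theorem rank_kronecker_one_le [Fintype n] [Fintype p] [DecidableEq p] (A : Matrix m n K) :
    (A ⊗ₖ (1 : Matrix p p K)).rank ≤ A.rank * Fintype.card p := by
  -- every column of `A ⊗ 1` is, block by block, a vector of the column space of `A`
  let blocks : (p → LinearMap.range A.mulVecLin) →ₗ[K] (m × p → K) :=
    { toFun := fun v x => (v x.2 : m → K) x.1
      map_add' := by intros; ext; simp
      map_smul' := by intros; ext; simp }
  have hle : LinearMap.range (A ⊗ₖ (1 : Matrix p p K)).mulVecLin ≤ LinearMap.range blocks := by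
    rintro y ⟨x, rfl⟩
    refine ⟨fun j => ⟨A *ᵥ fun i => x (i, j), ⟨_, rfl⟩⟩, ?_⟩
    ext ⟨i, j⟩
    simp only [blocks, LinearMap.coe_mk, AddHom.coe_mk, mulVecLin_apply, mulVec, dotProduct,
      kroneckerMap_apply, one_apply, Fintype.sum_prod_type, mul_ite, mul_one, mul_zero]
    rw [Finset.sum_comm]
    simp
  calc (A ⊗ₖ (1 : Matrix p p K)).rank ≤ finrank K (LinearMap.range blocks) :=
        Submodule.finrank_mono hle
    _ ≤ finrank K (p → LinearMap.range A.mulVecLin) := LinearMap.finrank_range_le blocks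
    _ = A.rank * Fintype.card p := by rw [finrank_pi_fintype]; simp [rank, mul_comm]

theorem finrank_ker_inf_range_add_rank_mul [Fintype m] [Fintype n] (A : Matrix l m K)
    (B : Matrix m n K) :
    finrank K ↥(LinearMap.ker A.mulVecLin ⊓ LinearMap.range B.mulVecLin) + (A * B).rank =
      B.rank := by
  set W := LinearMap.range B.mulVecLin
  have hker : LinearMap.ker (A.mulVecLin.domRestrict W) =
      (LinearMap.ker A.mulVecLin ⊓ W).comap W.subtype := by
    rw [LinearMap.ker_domRestrict, Submodule.comap_inf, Submodule.comap_subtype_self, inf_top_eq]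
  have hrange : (A * B).rank = finrank K (LinearMap.range (A.mulVecLin.domRestrict W)) := by
    rw [LinearMap.range_domRestrict, rank, mulVecLin_mul, LinearMap.range_comp]
  rw [hrange, add_comm, ← (Submodule.comapSubtypeEquivOfLe inf_le_right).finrank_eq, ← hker,
    LinearMap.finrank_range_add_finrank_ker]
  rfl

end Matrix

theorem krank_le_rank {m n : Type*} [Fintype m] [Fintype n] (M : Matrix m n ℂ) :
    krank M ≤ M.rank := by
  obtain ⟨hcard, hindep⟩ : krank M ∈ {r : ℕ | r ≤ Fintype.card n ∧
      ∀ s : Finset n, s.card = r → LinearIndependent ℂ (fun j : s => M.transpose (j : n))} :=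
    Nat.sSup_mem ⟨0, Nat.zero_le _, fun s hs => by
      rw [Finset.card_eq_zero.mp hs]; exact linearIndependent_empty_type⟩
      ⟨Fintype.card n, fun _ hr => hr.1⟩
  obtain ⟨s, -, hs⟩ := Finset.exists_subset_card_eq (s := Finset.univ) (by simpa using hcard)
  calc krank M = finrank ℂ (Submodule.span ℂ (Set.range fun j : s => M.transpose (j : n))) := by
        rw [finrank_span_eq_card (hindep s hs), Fintype.card_coe, hs]
    _ ≤ M.rank := by
      rw [Matrix.rank_eq_finrank_span_cols]
      exact Submodule.finrank_mono (Submodule.span_mono (Set.range_comp_subset_range _ _))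

theorem kronecker_one_mul_khatriRao {t p q V : Type*} [Fintype p] [Fintype q] [DecidableEq q]
    (S : Matrix t p ℂ) (A : Matrix p V ℂ) (B : Matrix q V ℂ) :
    (S ⊗ₖ (1 : Matrix q q ℂ)) * khatriRao A B = khatriRao (S * A) B := by
  ext ⟨i, j⟩ v
  simp only [Matrix.mul_apply, khatriRao, Matrix.of_apply, Matrix.kroneckerMap_apply,
    Matrix.one_apply, Fintype.sum_prod_type, mul_ite, mul_one, mul_zero, ite_mul, zero_mul]
  rw [Finset.sum_comm]
  simp [Finset.sum_mul, mul_assoc]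

section RedundancyPattern

variable {ι κ L G : Type*} [Add G] [DecidableEq G]

/-- The redundancy pattern `Υ`, with the sum co-array listed by `c`. -/
def redundancyPattern (a : ι → G) (b : κ → G) (c : L → G) : Matrix (ι × κ) L ℂ :=
  Matrix.of fun x ℓ => if a x.1 + b x.2 = c ℓ then 1 else 0

theorem redundancyPattern_mul_eq_khatriRao [Fintype L] {V : Type*} {a : ι → G} {b : κ → G}
    {c : L → G} (hc : Function.Injective c) (hab : ∀ n m, ∃ ℓ, c ℓ = a n + b m)
    (f : G → V → ℂ) (hf : ∀ x y i, f (x + y) i = f x i * f y i) :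
    redundancyPattern a b c * Matrix.of (fun ℓ i => f (c ℓ) i) =
      khatriRao (Matrix.of fun n i => f (a n) i) (Matrix.of fun m i => f (b m) i) := by
  ext ⟨n, m⟩ i
  obtain ⟨ℓ₀, hℓ₀⟩ := hab n m
  classical
  simp [Matrix.mul_apply, redundancyPattern, khatriRao, ← hf, ← hℓ₀, hc.eq_iff]

theorem rank_redundancyPattern [Fintype ι] [Fintype κ] [Fintype L] [DecidableEq L]
    {a : ι → G} {b : κ → G} {c : L → G} (hc : Function.Injective c)
    (hcab : ∀ ℓ, ∃ n m, a n + b m = c ℓ) :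
    (redundancyPattern a b c).rank = Fintype.card L := by
  choose n m hnm using hcab
  have hsub : (redundancyPattern a b c).submatrix (fun ℓ => (n ℓ, m ℓ)) id = 1 := by
    ext ℓ ℓ'
    simp [redundancyPattern, Matrix.one_apply, hnm, hc.eq_iff]
  refine le_antisymm (Matrix.rank_le_card_width _) ?_
  calc Fintype.card L = (1 : Matrix L L ℂ).rank := Matrix.rank_one.symm
    _ ≤ (redundancyPattern a b c).rank := hsub ▸ Matrix.rank_submatrix_le _ _ _

end RedundancyPattern

theorem stmt_3_general (Ntx Nrx T V Nsum : ℕ)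
    (dtx : Fin Ntx → ℤ) (drx : Fin Nrx → ℤ)
    (θ : Fin V → ℝ)
    (Atx : Matrix (Fin Ntx) (Fin V) ℂ)
    (hAtx : ∀ n i, Atx n i =
      Complex.exp (Complex.I * Real.pi * (dtx n : ℂ) * (Real.sin (θ i) : ℂ)))
    (Arx : Matrix (Fin Nrx) (Fin V) ℂ)
    (hArx : ∀ m i, Arx m i =
      Complex.exp (Complex.I * Real.pi * (drx m : ℂ) * (Real.sin (θ i) : ℂ)))
    (dSig : Fin Nsum → ℤ) (hdSigMono : StrictMono dSig)
    (hdSigrange : ∀ z : ℤ, (∃ ℓ, dSig ℓ = z) ↔ ∃ n m, dtx n + drx m = z)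
    (Υ : Matrix (Fin Ntx × Fin Nrx) (Fin Nsum) ℂ)
    (hΥ : ∀ n m ℓ, Υ (n, m) ℓ = if dtx n + drx m = dSig ℓ then 1 else 0)
    (S : Matrix (Fin T) (Fin Ntx) ℂ)
    (hB : krank (khatriRao (S * Atx) Arx) = min (S.rank * Nrx) Nsum) :
    ((S ⊗ₖ (1 : Matrix (Fin Nrx) (Fin Nrx) ℂ)) * Υ).rank = min (S.rank * Nrx) Nsum ∧
      Module.finrank ℂ
        ↥(LinearMap.ker (Matrix.mulVecLin (S ⊗ₖ (1 : Matrix (Fin Nrx) (Fin Nrx) ℂ))) ⊓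
            LinearMap.range Υ.mulVecLin) = max (Nsum - S.rank * Nrx) 0 := by
  set K := S ⊗ₖ (1 : Matrix (Fin Nrx) (Fin Nrx) ℂ)
  set steering : ℤ → Fin V → ℂ := fun z i =>
    Complex.exp (Complex.I * Real.pi * (z : ℂ) * (Real.sin (θ i) : ℂ))
  have hsteering : ∀ x y i, steering (x + y) i = steering x i * steering y i := by
    intro x y i
    simp only [steering, ← Complex.exp_add]
    congr 1
    push_cast
    ring
  have hΥpattern : Υ = redundancyPattern dtx drx dSig := Matrix.ext fun x ℓ => hΥ x.1 x.2 ℓ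
  have hfactor : K * Υ * Matrix.of (fun ℓ i => steering (dSig ℓ) i) = khatriRao (S * Atx) Arx := by
    rw [Matrix.mul_assoc, hΥpattern, redundancyPattern_mul_eq_khatriRao hdSigMono.injective
      (fun n m => (hdSigrange _).mpr ⟨n, m, rfl⟩) steering hsteering, kronecker_one_mul_khatriRao]
    congr
    exacts [(Matrix.ext hAtx).symm, (Matrix.ext hArx).symm]
  have hrankΥ : Υ.rank = Nsum := by
    rw [hΥpattern, rank_redundancyPattern hdSigMono.injective fun ℓ => (hdSigrange _).mp ⟨ℓ, rfl⟩,
      Fintype.card_fin]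
  have hrank : (K * Υ).rank = min (S.rank * Nrx) Nsum := by
    refine le_antisymm (le_min ?_ ?_) ?_
    · simpa using (Matrix.rank_mul_le_left K Υ).trans (Matrix.rank_kronecker_one_le S)
    · exact (Matrix.rank_mul_le_right K Υ).trans hrankΥ.le
    · calc min (S.rank * Nrx) Nsum = krank (khatriRao (S * Atx) Arx) := hB.symm
        _ ≤ (K * Υ * Matrix.of (fun ℓ i => steering (dSig ℓ) i)).rank :=
          hfactor ▸ krank_le_rank _
        _ ≤ (K * Υ).rank := Matrix.rank_mul_le_left _ _
  refine ⟨hrank, ?_⟩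
  have := Matrix.finrank_ker_inf_range_add_rank_mul K Υ
  omega

/-- if the sensing matrix `B = (S·A_tx) ⊙ A_rx` achieves the maximal
Kruskal rank `min (N_s·N_rx) N_Σ` (with `N_s = rank S`), then
`rank ((S ⊗ I) Υ) = min (N_s·N_rx) N_Σ`, and equivalently
`dim (ker (S ⊗ I) ⊓ range Υ) = max (N_Σ − N_s·N_rx) 0`. -/
theorem stmt_3 (Ntx Nrx T V Nsum : ℕ)
    (hNtx : 0 < Ntx) (hNrx : 0 < Nrx) (hT : 0 < T) (hV : 0 < V)
    (dtx : Fin Ntx → ℤ) (drx : Fin Nrx → ℤ)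
    (hdtx0 : dtx ⟨0, hNtx⟩ = 0) (hdtxMono : StrictMono dtx)
    (hdrx0 : drx ⟨0, hNrx⟩ = 0) (hdrxMono : StrictMono drx)
    (θ : Fin V → ℝ) (hθinj : Function.Injective θ)
    (hθrange : ∀ i, θ i ∈ Set.Ico (-(Real.pi / 2)) (Real.pi / 2))
    (Atx : Matrix (Fin Ntx) (Fin V) ℂ)
    (hAtx : ∀ n i, Atx n i =
      Complex.exp (Complex.I * Real.pi * (dtx n : ℂ) * (Real.sin (θ i) : ℂ)))
    (Arx : Matrix (Fin Nrx) (Fin V) ℂ)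
    (hArx : ∀ m i, Arx m i =
      Complex.exp (Complex.I * Real.pi * (drx m : ℂ) * (Real.sin (θ i) : ℂ)))
    (dSig : Fin Nsum → ℤ) (hdSigMono : StrictMono dSig)
    (hdSigrange : ∀ z : ℤ, (∃ ℓ, dSig ℓ = z) ↔ ∃ n m, dtx n + drx m = z)
    (Υ : Matrix (Fin Ntx × Fin Nrx) (Fin Nsum) ℂ)
    (hΥ : ∀ n m ℓ, Υ (n, m) ℓ = if dtx n + drx m = dSig ℓ then 1 else 0)
    (S : Matrix (Fin T) (Fin Ntx) ℂ)
    (hB : krank (khatriRao (S * Atx) Arx) = min (S.rank * Nrx) Nsum) :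
    ((S ⊗ₖ (1 : Matrix (Fin Nrx) (Fin Nrx) ℂ)) * Υ).rank = min (S.rank * Nrx) Nsum ∧
      Module.finrank ℂ
        ↥(LinearMap.ker (Matrix.mulVecLin (S ⊗ₖ (1 : Matrix (Fin Nrx) (Fin Nrx) ℂ))) ⊓
            LinearMap.range Υ.mulVecLin) = max (Nsum - S.rank * Nrx) 0 :=
  stmt_3_general Ntx Nrx T V Nsum dtx drx θ Atx hAtx Arx hArx dSig hdSigMono hdSigrange Υ hΥ S hB
end

section
/- In the active sensing setup, suppose the waveform matrix S ∈ ℂ^{T×N_tx} has full column rank, rank(S) = N_tx. Then krank(B) = N_Σ if and only if krank(A) = N_Σ, where B = (S·A_tx) ⊙ A_rx and A is the co-array manifold. -/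
/-- for full waveform rank `rank S = N_tx`,
`krank B = N_Σ` iff `krank A = N_Σ`, where `A` is the co-array manifold. -/
theorem stmt_6 (Ntx Nrx T V Nsum : ℕ)
    (hNtx : 0 < Ntx) (hNrx : 0 < Nrx) (hT : 0 < T) (hV : 0 < V)
    (dtx : Fin Ntx → ℤ) (drx : Fin Nrx → ℤ)
    (hdtx0 : dtx ⟨0, hNtx⟩ = 0) (hdtxMono : StrictMono dtx)
    (hdrx0 : drx ⟨0, hNrx⟩ = 0) (hdrxMono : StrictMono drx)
    (θ : Fin V → ℝ) (hθinj : Function.Injective θ)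
    (hθrange : ∀ i, θ i ∈ Set.Ico (-(Real.pi / 2)) (Real.pi / 2))
    (Atx : Matrix (Fin Ntx) (Fin V) ℂ)
    (hAtx : ∀ n i, Atx n i =
      Complex.exp (Complex.I * Real.pi * (dtx n : ℂ) * (Real.sin (θ i) : ℂ)))
    (Arx : Matrix (Fin Nrx) (Fin V) ℂ)
    (hArx : ∀ m i, Arx m i =
      Complex.exp (Complex.I * Real.pi * (drx m : ℂ) * (Real.sin (θ i) : ℂ)))
    (dSig : Fin Nsum → ℤ) (hdSigMono : StrictMono dSig)
    (hdSigrange : ∀ z : ℤ, (∃ ℓ, dSig ℓ = z) ↔ ∃ n m, dtx n + drx m = z)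
    (A : Matrix (Fin Nsum) (Fin V) ℂ)
    (hA : ∀ ℓ i, A ℓ i =
      Complex.exp (Complex.I * Real.pi * (dSig ℓ : ℂ) * (Real.sin (θ i) : ℂ)))
    (S : Matrix (Fin T) (Fin Ntx) ℂ)
    (hS : S.rank = Ntx) :
    krank (khatriRao (S * Atx) Arx) = Nsum ↔ krank A = Nsum := by
  classical
  have hφex : ∀ (n : Fin Ntx) (m : Fin Nrx), ∃ ℓ, dSig ℓ = dtx n + drx m := fun n m =>
    (hdSigrange (dtx n + drx m)).mpr ⟨n, m, rfl⟩
  set φ : Fin Ntx × Fin Nrx → Fin Nsum := fun p => (hφex p.1 p.2).choose with hφdef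
  have hφ : ∀ n m, dSig (φ (n, m)) = dtx n + drx m := fun n m => (hφex n m).choose_spec
  have hφsurj : Function.Surjective φ := by
    intro ℓ
    obtain ⟨n, m, h⟩ := (hdSigrange (dSig ℓ)).mp ⟨ℓ, rfl⟩
    exact ⟨(n, m), hdSigMono.injective (by rw [hφ, h])⟩
  have hprod : ∀ n m i, Atx n i * Arx m i = A (φ (n, m)) i := by
    intro n m i
    rw [hAtx, hArx, hA, ← Complex.exp_add, hφ]
    congr 1
    push_cast
    ring
  have hSinj : Function.Injective S.mulVecLin := by
    rw [← LinearMap.ker_eq_bot]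
    have h1 := LinearMap.finrank_range_add_finrank_ker S.mulVecLin
    have h2 : Module.finrank ℂ (LinearMap.range S.mulVecLin) = Ntx := hS
    rw [h2, Module.finrank_pi] at h1
    simp only [Fintype.card_fin] at h1
    have h3 : Module.finrank ℂ (LinearMap.ker S.mulVecLin) = 0 := by omega
    exact Submodule.finrank_eq_zero.mp h3
  let L : (Fin Nsum → ℂ) →ₗ[ℂ] (Fin T × Fin Nrx → ℂ) :=
    { toFun := fun v p => ∑ n, S p.1 n * v (φ (n, p.2))
      map_add' := by
        intro v w; funext p
        simp [mul_add, Finset.sum_add_distrib]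
      map_smul' := by
        intro c v; funext p
        simp [Finset.mul_sum, mul_left_comm] }
  have hLker : LinearMap.ker L = ⊥ := by
    rw [LinearMap.ker_eq_bot']
    intro v hv
    have hz : ∀ n m, v (φ (n, m)) = 0 := by
      intro n m
      have hm : S.mulVecLin (fun n => v (φ (n, m))) = 0 := by
        funext t
        have := congrFun hv (t, m)
        simpa [L, Matrix.mulVecLin_apply, Matrix.mulVec, dotProduct] using this
      have h0 : S.mulVecLin (fun n => v (φ (n, m))) = S.mulVecLin 0 := by
        rw [hm, map_zero]
      exact congrFun (hSinj h0) n
    funext ℓ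
    obtain ⟨⟨n, m⟩, rfl⟩ := hφsurj ℓ
    exact hz n m
  have hcol : ∀ i : Fin V, (khatriRao (S * Atx) Arx).transpose i = L (A.transpose i) := by
    intro i
    funext p
    show (S * Atx) p.1 i * Arx p.2 i = ∑ n, S p.1 n * A (φ (n, p.2)) i
    rw [Matrix.mul_apply, Finset.sum_mul]
    exact Finset.sum_congr rfl fun n _ => by rw [mul_assoc, hprod]
  have hLI : ∀ s : Finset (Fin V),
      LinearIndependent ℂ (fun j : s => (khatriRao (S * Atx) Arx).transpose (j : Fin V)) ↔
      LinearIndependent ℂ (fun j : s => A.transpose (j : Fin V)) := by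
    intro s
    have heq : (fun j : s => (khatriRao (S * Atx) Arx).transpose (j : Fin V))
        = L ∘ (fun j : s => A.transpose (j : Fin V)) := by
      funext j; exact hcol j
    rw [heq]
    exact ⟨fun h => h.of_comp L, fun h => h.map' L hLker⟩
  have hkr : krank (khatriRao (S * Atx) Arx) = krank A := by
    unfold krank
    congr 1
    ext r
    simp only [Set.mem_setOf_eq]
    exact and_congr Iff.rfl (forall_congr' fun s => imp_congr Iff.rfl (hLI s))
  rw [hkr]
end

section
/- In the active sensing setup, suppose the waveform matrix has rank one, S = u·v^H for some nonzero u ∈ ℂ^T and nonzero v ∈ ℂ^{N_tx}. Then krank(B) = N_rx if and only if both krank(A_rx) = N_rx and (v^H·A_tx)_i ≠ 0 for every i ∈ {1, …, V}, where B = (S·A_tx) ⊙ A_rx. -/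
/-! A rank-one waveform `S = u vᴴ` turns column `i` of `B` into `u ⊗ (cᵢ aᵢ)`, where
`c = vᴴ A_tx` and `aᵢ` is column `i` of `A_rx`. Since `u ≠ 0`, tensoring with `u` is injective,
so a set of columns of `B` is independent iff the corresponding `cᵢ` are nonzero and the
corresponding columns of `A_rx` are independent. Hence `krank B = krank A_rx` when all `cᵢ ≠ 0`,
and `krank B = 0` otherwise (a zero column). -/

theorem linearIndependent_smul_iff {ι K M : Type*} [Field K] [AddCommGroup M] [Module K M]
    {c : ι → K} {g : ι → M} :
    LinearIndependent K (fun i => c i • g i) ↔ (∀ i, c i ≠ 0) ∧ LinearIndependent K g := by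
  constructor
  · intro h
    have hc : ∀ i, c i ≠ 0 := fun i => left_ne_zero_of_smul (h.ne_zero i)
    exact ⟨hc, (LinearIndependent.units_smul_iff g fun i => Units.mk0 (c i) (hc i)).1 h⟩
  · rintro ⟨hc, h⟩
    exact h.units_smul fun i => Units.mk0 (c i) (hc i)

theorem linearIndependent_kronecker_left_iff {ι K T q : Type*} [Field K] {u : T → K} (hu : u ≠ 0)
    {g : ι → q → K} :
    LinearIndependent K (fun i (p : T × q) => u p.1 * g i p.2) ↔ LinearIndependent K g := by
  let L : (q → K) →ₗ[K] (T × q → K) := LinearMap.pi fun p => u p.1 • LinearMap.proj p.2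
  have hL : LinearMap.ker L = ⊥ := by
    obtain ⟨t, ht⟩ := Function.ne_iff.1 hu
    refine LinearMap.ker_eq_bot'.2 fun w hw => funext fun m => ?_
    exact (mul_eq_zero.1 (congrFun hw (t, m))).resolve_left ht
  exact ⟨fun h => h.of_comp L, fun h => h.map' L hL⟩

section Krank

variable {m m' n : Type*} [Fintype m] [Fintype m'] [Fintype n]

theorem linearIndependent_cols_of_card_le_krank (M : Matrix m n ℂ) {s : Finset n}
    (hs : s.card ≤ krank M) : LinearIndependent ℂ (fun j : s => M.transpose (j : n)) := by
  have hmem : krank M ∈ {r : ℕ | r ≤ Fintype.card n ∧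
      ∀ s : Finset n, s.card = r → LinearIndependent ℂ (fun j : s => M.transpose (j : n))} :=
    Nat.sSup_mem ⟨0, Nat.zero_le _, fun s hs => by
        rw [Finset.card_eq_zero.1 hs]; exact linearIndependent_empty_type⟩
      ⟨Fintype.card n, fun _ hr => hr.1⟩
  obtain ⟨t, hst, -, ht⟩ :=
    Finset.exists_subsuperset_card_eq s.subset_univ hs (by simpa using hmem.1)
  exact LinearIndepOn.mono (hmem.2 t ht) (Finset.coe_subset.2 hst)

theorem krank_eq_zero_of_transpose_eq_zero (M : Matrix m n ℂ) {i : n} (hi : M.transpose i = 0) :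
    krank M = 0 := by
  by_contra hM
  have h := linearIndependent_cols_of_card_le_krank M (s := {i})
    (by rw [Finset.card_singleton]; omega)
  exact h.ne_zero ⟨i, Finset.mem_singleton_self i⟩ hi

theorem krank_congr {M : Matrix m n ℂ} {N : Matrix m' n ℂ}
    (h : ∀ s : Finset n, LinearIndependent ℂ (fun j : s => M.transpose (j : n)) ↔
      LinearIndependent ℂ (fun j : s => N.transpose (j : n))) :
    krank M = krank N := by
  simp only [krank, h]

end Krank

theorem linearIndependent_cols_khatriRao_vecMulVec_iff {T q n : Type*} {u : T → ℂ} (hu : u ≠ 0)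
    (c : n → ℂ) (C : Matrix q n ℂ) (s : Finset n) :
    LinearIndependent ℂ (fun j : s => (khatriRao (Matrix.vecMulVec u c) C).transpose (j : n)) ↔
      (∀ j ∈ s, c j ≠ 0) ∧ LinearIndependent ℂ (fun j : s => C.transpose (j : n)) := by
  have hcol : ∀ j, (khatriRao (Matrix.vecMulVec u c) C).transpose j =
      fun p : T × q => u p.1 * (c j • C.transpose j) p.2 := by
    intro j; ext p; simp [khatriRao, Matrix.vecMulVec_apply, mul_assoc]
  simp only [hcol, linearIndependent_kronecker_left_iff hu, linearIndependent_smul_iff,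
    Subtype.forall]

theorem stmt_7_general (Ntx Nrx T V : ℕ)
    (hNrx : 0 < Nrx)
    (Atx : Matrix (Fin Ntx) (Fin V) ℂ)
    (Arx : Matrix (Fin Nrx) (Fin V) ℂ)
    (u : Fin T → ℂ) (hu : u ≠ 0) (v : Fin Ntx → ℂ)
    (S : Matrix (Fin T) (Fin Ntx) ℂ)
    (hS : S = Matrix.vecMulVec u (star v)) :
    krank (khatriRao (S * Atx) Arx) = Nrx ↔
      krank Arx = Nrx ∧ ∀ i, Matrix.vecMul (star v) Atx i ≠ 0 := by
  rw [hS, Matrix.vecMulVec_mul]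
  set c := Matrix.vecMul (star v) Atx
  have hcols := linearIndependent_cols_khatriRao_vecMulVec_iff hu c Arx
  by_cases hc : ∀ i, c i ≠ 0
  · rw [krank_congr fun s => (hcols s).trans (and_iff_right fun i _ => hc i)]
    exact ⟨fun h => ⟨h, hc⟩, And.left⟩
  · obtain ⟨i, hi⟩ := not_forall_not.1 hc
    have hzero : (khatriRao (Matrix.vecMulVec u c) Arx).transpose i = 0 := by
      ext p; simp [khatriRao, Matrix.vecMulVec_apply, hi]
    simp only [krank_eq_zero_of_transpose_eq_zero _ hzero, hc, and_false, iff_false]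
    omega

/-- for a rank-one waveform matrix `S = u·vᴴ` (`u ≠ 0`, `v ≠ 0`),
`krank B = N_rx` iff `krank A_rx = N_rx` and every entry of `vᴴ·A_tx` is nonzero. -/
theorem stmt_7 (Ntx Nrx T V : ℕ)
    (hNtx : 0 < Ntx) (hNrx : 0 < Nrx) (hT : 0 < T) (hV : 0 < V)
    (dtx : Fin Ntx → ℤ) (drx : Fin Nrx → ℤ)
    (hdtx0 : dtx ⟨0, hNtx⟩ = 0) (hdtxMono : StrictMono dtx)
    (hdrx0 : drx ⟨0, hNrx⟩ = 0) (hdrxMono : StrictMono drx)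
    (θ : Fin V → ℝ) (hθinj : Function.Injective θ)
    (hθrange : ∀ i, θ i ∈ Set.Ico (-(Real.pi / 2)) (Real.pi / 2))
    (Atx : Matrix (Fin Ntx) (Fin V) ℂ)
    (hAtx : ∀ n i, Atx n i =
      Complex.exp (Complex.I * Real.pi * (dtx n : ℂ) * (Real.sin (θ i) : ℂ)))
    (Arx : Matrix (Fin Nrx) (Fin V) ℂ)
    (hArx : ∀ m i, Arx m i =
      Complex.exp (Complex.I * Real.pi * (drx m : ℂ) * (Real.sin (θ i) : ℂ)))
    (u : Fin T → ℂ) (hu : u ≠ 0) (v : Fin Ntx → ℂ) (hv : v ≠ 0)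
    (S : Matrix (Fin T) (Fin Ntx) ℂ)
    (hS : S = Matrix.vecMulVec u (star v)) :
    krank (khatriRao (S * Atx) Arx) = Nrx ↔
      krank Arx = Nrx ∧ ∀ i, Matrix.vecMul (star v) Atx i ≠ 0 :=
  stmt_7_general Ntx Nrx T V hNrx Atx Arx u hu v S hS
end

section
/- Let F ∈ ℂ^{M×m} and G ∈ ℂ^{m×n} be complex matrices. If F has full column rank, rank(F) = m, then krank(F·G) = krank(G). -/
/-- the Kruskal rank is invariant under left-multiplication by a matrix
with full column rank: if `rank F = m` then `krank (F·G) = krank G`. -/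
theorem stmt_10 {M m n : ℕ} (F : Matrix (Fin M) (Fin m) ℂ) (G : Matrix (Fin m) (Fin n) ℂ)
    (hF : F.rank = m) :
    krank (F * G) = krank G := by
  have hker : LinearMap.ker F.mulVecLin = ⊥ := by
    have h := LinearMap.finrank_range_add_finrank_ker F.mulVecLin
    rw [Matrix.rank] at hF
    rw [hF] at h
    have hd : Module.finrank ℂ (Fin m → ℂ) = m := by simp
    rw [hd] at h
    have : Module.finrank ℂ (LinearMap.ker F.mulVecLin) = 0 := by omega
    exact Submodule.finrank_eq_zero.mp this
  have key : ∀ s : Finset (Fin n),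
      (LinearIndependent ℂ (fun j : s => (F * G).transpose (j : Fin n)) ↔
       LinearIndependent ℂ (fun j : s => G.transpose (j : Fin n))) := by
    intro s
    have hcol : (fun j : s => (F * G).transpose (j : Fin n)) =
        F.mulVecLin ∘ (fun j : s => G.transpose (j : Fin n)) := by
      funext j
      funext i
      simp [Matrix.mul_apply, Matrix.mulVecLin, Matrix.mulVec, dotProduct,
        Matrix.transpose_apply]
    rw [hcol]
    exact F.mulVecLin.linearIndependent_iff hker
  unfold krank
  congr 1
  ext r
  simp only [Set.mem_setOf_eq]
  constructor <;> rintro ⟨h1, h2⟩ <;> refine ⟨h1, fun s hs => ?_⟩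
  · exact (key s).mp (h2 s hs)
  · exact (key s).mpr (h2 s hs)
end

section
/- Fix integers N_tx, N_rx ≥ 1 and Δ with 1 ≤ Δ ≤ N_rx. Then the sum co-array of the generalized nested array with spacing Δ is contiguous: {(n−1)Δ + (m−1) : 1 ≤ n ≤ N_tx, 1 ≤ m ≤ N_rx} = {0, 1, …, N_rx + (N_tx−1)Δ − 1}; in particular it has exactly N_rx + (N_tx−1)Δ elements. -/
/-- the sum co-array of the generalized nested array with spacing
`1 ≤ Δ ≤ N_rx` is contiguous:
`{(n−1)Δ + (m−1)} = {0, 1, …, N_rx + (N_tx−1)Δ − 1}`, and in particular it has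
exactly `N_rx + (N_tx−1)Δ` elements. -/
theorem stmt_14 (Ntx Nrx Δ : ℕ)
    (hNtx : 1 ≤ Ntx) (hNrx : 1 ≤ Nrx) (hΔ1 : 1 ≤ Δ) (hΔ2 : Δ ≤ Nrx) :
    {z : ℕ | ∃ n : Fin Ntx, ∃ m : Fin Nrx, z = (n : ℕ) * Δ + (m : ℕ)}
        = Set.Iio (Nrx + (Ntx - 1) * Δ) ∧
      Set.ncard {z : ℕ | ∃ n : Fin Ntx, ∃ m : Fin Nrx, z = (n : ℕ) * Δ + (m : ℕ)}
        = Nrx + (Ntx - 1) * Δ := by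
  have hset : {z : ℕ | ∃ n : Fin Ntx, ∃ m : Fin Nrx, z = (n : ℕ) * Δ + (m : ℕ)}
      = Set.Iio (Nrx + (Ntx - 1) * Δ) := by
    ext z
    simp only [Set.mem_setOf_eq, Set.mem_Iio]
    constructor
    · rintro ⟨n, m, rfl⟩
      have hn : (n : ℕ) ≤ Ntx - 1 := Nat.le_sub_one_of_lt n.isLt
      have hm : (m : ℕ) < Nrx := m.isLt
      calc (n : ℕ) * Δ + (m : ℕ) < (n : ℕ) * Δ + Nrx := by omega
        _ ≤ (Ntx - 1) * Δ + Nrx := by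
            have := Nat.mul_le_mul_right Δ hn; omega
        _ = Nrx + (Ntx - 1) * Δ := by ring
    · intro hz
      by_cases h : z / Δ ≤ Ntx - 1
      · refine ⟨⟨z / Δ, by omega⟩, ⟨z % Δ, by
          have := Nat.mod_lt z (show 0 < Δ by omega); omega⟩, ?_⟩
        have h1 : z / Δ * Δ + z % Δ = z := Nat.div_add_mod' z Δ
        simp
        omega
      · push_neg at h
        have hge : (Ntx - 1) * Δ ≤ z := by
          have : Ntx * Δ ≤ z := by
            calc Ntx * Δ ≤ (z / Δ) * Δ := Nat.mul_le_mul_right Δ (by omega)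
              _ ≤ z := Nat.div_mul_le_self z Δ
          have : (Ntx - 1) * Δ ≤ Ntx * Δ := Nat.mul_le_mul_right Δ (by omega)
          omega
        refine ⟨⟨Ntx - 1, by omega⟩, ⟨z - (Ntx - 1) * Δ, by omega⟩, ?_⟩
        simp
        omega
  refine ⟨hset, ?_⟩
  rw [hset]
  rw [show Set.Iio (Nrx + (Ntx - 1) * Δ) = ↑(Finset.range (Nrx + (Ntx - 1) * Δ)) by
    ext x; simp]
  rw [Set.ncard_coe_finset]
  simp
end

section
/- Consider the uniform linear array, i.e., the generalized nested array with Δ = 1, with N_tx ≥ 2 transmit sensors, N_rx ≥ N_tx − 1 receive sensors, N_Σ = N_tx + N_rx − 1, and pairwise distinct grid angles θ_1, …, θ_V ∈ [−π/2, π/2) with V ≥ N_Σ. Then there exist T ∈ ℕ_+ and a waveform matrix S ∈ ℂ^{T×N_tx} with rank(S) = 2 whose columns are all zero except possibly columns 1 and N_tx (i.e., only the two outermost transmit sensors are active), such that the sensing matrix B = (S·A_tx) ⊙ A_rx satisfies krank(B) = N_Σ. -/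
/-- for the uniform linear array (GNA with `Δ = 1`) with `N_tx ≥ 2`,
`N_rx ≥ N_tx − 1` and `N_Σ = N_tx + N_rx − 1`, there is a rank-2 waveform matrix that
only activates the two outermost transmit sensors and achieves `krank B = N_Σ`. -/
theorem stmt_15 (Ntx Nrx V Nsum : ℕ)
    (hNtx : 2 ≤ Ntx) (hNrx1 : 0 < Nrx) (hNrx : Ntx - 1 ≤ Nrx)
    (hNsum : Nsum = Ntx + Nrx - 1)
    (dtx : Fin Ntx → ℤ) (hdtx : ∀ n, dtx n = (n : ℤ))
    (drx : Fin Nrx → ℤ) (hdrx : ∀ m, drx m = (m : ℤ))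
    (θ : Fin V → ℝ) (hθinj : Function.Injective θ)
    (hθrange : ∀ i, θ i ∈ Set.Ico (-(Real.pi / 2)) (Real.pi / 2))
    (hV : Nsum ≤ V)
    (Atx : Matrix (Fin Ntx) (Fin V) ℂ)
    (hAtx : ∀ n i, Atx n i =
      Complex.exp (Complex.I * Real.pi * (dtx n : ℂ) * (Real.sin (θ i) : ℂ)))
    (Arx : Matrix (Fin Nrx) (Fin V) ℂ)
    (hArx : ∀ m i, Arx m i =
      Complex.exp (Complex.I * Real.pi * (drx m : ℂ) * (Real.sin (θ i) : ℂ))) :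
    ∃ T : ℕ, 0 < T ∧ ∃ S : Matrix (Fin T) (Fin Ntx) ℂ,
      S.rank = 2 ∧
      (∀ (t : Fin T) (n : Fin Ntx), (n : ℕ) ≠ 0 → (n : ℕ) ≠ Ntx - 1 → S t n = 0) ∧
      krank (khatriRao (S * Atx) Arx) = Nsum := by
  classical
  have hpi := Real.pi_pos
  set z : Fin V → ℂ := fun i => Complex.exp (Complex.I * Real.pi * (Real.sin (θ i) : ℂ))
    with hzdef
  -- bounds on sines
  have hsin_lt : ∀ i, Real.sin (θ i) < 1 := by
    intro i
    have h := hθrange i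
    have h2 : Real.sin (θ i) < Real.sin (Real.pi / 2) := by
      apply Real.strictMonoOn_sin ⟨h.1, h.2.le⟩ ⟨by linarith, le_refl _⟩ h.2
    simpa [Real.sin_pi_div_two] using h2
  have hsin_ge : ∀ i, -1 ≤ Real.sin (θ i) := fun i => Real.neg_one_le_sin _
  -- z is injective
  have hzinj : Function.Injective z := by
    intro i j hij
    simp only [hzdef] at hij
    rw [Complex.exp_eq_exp_iff_exists_int] at hij
    obtain ⟨n, hn⟩ := hij
    have h2 : ((Real.pi * Real.sin (θ i) : ℝ) : ℂ) * Complex.I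
        = (((Real.pi * Real.sin (θ j)) + (n * (2 * Real.pi)) : ℝ) : ℂ) * Complex.I := by
      push_cast
      push_cast at hn
      linear_combination hn
    have h3 := mul_right_cancel₀ Complex.I_ne_zero h2
    have hre : (Real.pi * Real.sin (θ i) : ℝ)
        = Real.pi * Real.sin (θ j) + (n : ℝ) * (2 * Real.pi) := by exact_mod_cast h3
    have h5 : Real.pi * Real.sin (θ i) = Real.pi * (Real.sin (θ j) + 2 * (n : ℝ)) := by
      linear_combination hre
    have h6 : Real.sin (θ i) = Real.sin (θ j) + 2 * (n : ℝ) :=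
      mul_left_cancel₀ (ne_of_gt hpi) h5
    have hn0 : n = 0 := by
      have hlt : (n : ℝ) < 1 := by nlinarith [hsin_lt i, hsin_ge j]
      have hgt : (-1 : ℝ) < n := by nlinarith [hsin_lt j, hsin_ge i]
      have hlt' : n < 1 := by exact_mod_cast hlt
      have hgt' : (-1 : ℤ) < n := by exact_mod_cast hgt
      omega
    rw [hn0] at h6
    simp at h6
    have hθeq : θ i = θ j := by
      have hi := hθrange i
      have hj := hθrange j
      exact Real.injOn_sin ⟨hi.1, hi.2.le⟩ ⟨hj.1, hj.2.le⟩ h6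
    exact hθinj hθeq
  -- manifold matrices as powers of z
  have hAtxz : ∀ n i, Atx n i = z i ^ (n : ℕ) := by
    intro n i
    rw [hAtx, hdtx, hzdef]
    rw [show Complex.I * Real.pi * ((n : ℤ) : ℂ) * (Real.sin (θ i) : ℂ)
        = ((n : ℕ) : ℂ) * (Complex.I * Real.pi * (Real.sin (θ i) : ℂ)) by push_cast; ring]
    exact Complex.exp_nat_mul _ _
  have hArxz : ∀ m i, Arx m i = z i ^ (m : ℕ) := by
    intro m i
    rw [hArx, hdrx, hzdef]
    rw [show Complex.I * Real.pi * ((m : ℤ) : ℂ) * (Real.sin (θ i) : ℂ)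
        = ((m : ℕ) : ℂ) * (Complex.I * Real.pi * (Real.sin (θ i) : ℂ)) by push_cast; ring]
    exact Complex.exp_nat_mul _ _
  -- the waveform matrix
  have h0lt : 0 < Ntx := by omega
  have hl : Ntx - 1 < Ntx := by omega
  set idx : Fin 2 → Fin Ntx := fun t => if (t : ℕ) = 0 then ⟨0, h0lt⟩ else ⟨Ntx - 1, hl⟩
    with hidxdef
  set S : Matrix (Fin 2) (Fin Ntx) ℂ :=
    Matrix.of fun t n => if n = idx t then (1 : ℂ) else 0 with hSdef
  have hidxval : ∀ t : Fin 2, ((idx t : Fin Ntx) : ℕ) = (t : ℕ) * (Ntx - 1) := by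
    intro t
    fin_cases t <;> simp [hidxdef]
  have hidxne : idx 1 ≠ idx 0 := by
    intro h
    have := congrArg (fun x : Fin Ntx => (x : ℕ)) h
    simp [hidxdef] at this
    omega
  -- S * Atx formula
  have hSmul : ∀ (t : Fin 2) (i : Fin V), (S * Atx) t i = z i ^ ((t : ℕ) * (Ntx - 1)) := by
    intro t i
    rw [Matrix.mul_apply]
    rw [Finset.sum_eq_single (idx t)]
    · simp [hSdef, hAtxz, hidxval]
    · intro b _ hb
      simp [hSdef, hb]
    · simp
  -- the sensing matrix entries
  have hB : ∀ (t : Fin 2) (m : Fin Nrx) (i : Fin V),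
      khatriRao (S * Atx) Arx (t, m) i = z i ^ ((t : ℕ) * (Ntx - 1) + (m : ℕ)) := by
    intro t m i
    simp only [khatriRao, Matrix.of_apply]
    rw [hSmul, hArxz, ← pow_add]
  -- rank of S is 2
  have hrank : S.rank = 2 := by
    have happ : ∀ (v : Fin Ntx → ℂ) (t : Fin 2), S.mulVecLin v t = v (idx t) := by
      intro v t
      simp only [Matrix.mulVecLin_apply, Matrix.mulVec, dotProduct]
      rw [Finset.sum_eq_single (idx t)]
      · simp [hSdef]
      · intro b _ hb; simp [hSdef, hb]
      · simp
    have hsurj : Function.Surjective S.mulVecLin := by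
      intro w
      refine ⟨fun n => if n = idx 0 then w 0 else if n = idx 1 then w 1 else 0, ?_⟩
      funext t
      rw [happ]
      fin_cases t
      · simp
      · simp [hidxne]
    have hrange : LinearMap.range S.mulVecLin = ⊤ := LinearMap.range_eq_top.mpr hsurj
    rw [Matrix.rank, hrange, finrank_top, Module.finrank_pi]
    simp
  -- exponent selector for rows
  have hEbound : ∀ p : Fin 2 × Fin Nrx, (p.1 : ℕ) * (Ntx - 1) + (p.2 : ℕ) < Nsum := by
    intro p
    have h1 : (p.1 : ℕ) < 2 := p.1.isLt
    have h2 : (p.2 : ℕ) < Nrx := p.2.isLt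
    have : (p.1 : ℕ) = 0 ∨ (p.1 : ℕ) = 1 := by omega
    rcases this with h | h <;> rw [h] <;> omega
  set g' : Fin 2 × Fin Nrx → Fin Nsum :=
    fun p => ⟨(p.1 : ℕ) * (Ntx - 1) + (p.2 : ℕ), hEbound p⟩ with hg'def
  have hBg : ∀ (p : Fin 2 × Fin Nrx) (j : Fin V),
      khatriRao (S * Atx) Arx p j = z j ^ ((g' p : Fin Nsum) : ℕ) := by
    intro p j
    rw [show p = (p.1, p.2) from rfl, hB]
  -- row selector hitting every exponent
  have he_aux : ∀ k : Fin Nsum, ¬ (k : ℕ) < Nrx → (k : ℕ) - (Ntx - 1) < Nrx := by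
    intro k h
    have := k.isLt
    omega
  set e : Fin Nsum → Fin 2 × Fin Nrx := fun k =>
    if h : (k : ℕ) < Nrx then (0, ⟨(k : ℕ), h⟩) else (1, ⟨(k : ℕ) - (Ntx - 1), he_aux k h⟩)
    with hedef
  have hBe : ∀ (k : Fin Nsum) (j : Fin V),
      khatriRao (S * Atx) Arx (e k) j = z j ^ (k : ℕ) := by
    intro k j
    by_cases h : (k : ℕ) < Nrx
    · have hek : e k = (0, ⟨(k : ℕ), h⟩) := by rw [hedef]; exact dif_pos h
      rw [hek, hB]
      simp
    · have hek : e k = (1, ⟨(k : ℕ) - (Ntx - 1), he_aux k h⟩) := by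
        rw [hedef]; exact dif_neg h
      rw [hek, hB]
      congr 1
      have := k.isLt
      simp only [Fin.val_one]
      omega
  -- every Nsum columns are linearly independent
  have key : ∀ s : Finset (Fin V), s.card = Nsum →
      LinearIndependent ℂ (fun j : s => (khatriRao (S * Atx) Arx).transpose (j : Fin V)) := by
    intro s hs
    have hcard : Fintype.card s = Nsum := by simp [hs]
    let σ : s ≃ Fin Nsum := Fintype.equivFinOfCardEq hcard
    set w : Fin Nsum → ℂ := fun k => z (σ.symm k) with hwdef
    have hw : Function.Injective w := by
      intro a b hab
      exact σ.symm.injective (Subtype.coe_injective (hzinj hab))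
    have hdet : (Matrix.vandermonde w).det ≠ 0 := Matrix.det_vandermonde_ne_zero_iff.mpr hw
    have hunit : IsUnit (Matrix.vandermonde w) := by
      rw [Matrix.isUnit_iff_isUnit_det]
      exact isUnit_iff_ne_zero.mpr hdet
    have hLIrows : LinearIndependent ℂ (fun k : Fin Nsum => Matrix.vandermonde w k) :=
      Matrix.linearIndependent_rows_iff_isUnit.mpr hunit
    have hLIg : LinearIndependent ℂ
        (fun j : s => (fun k : Fin Nsum => z (j : Fin V) ^ (k : ℕ))) := by
      have hcomp := hLIrows.comp σ σ.injective
      have heq : (fun j : s => (fun k : Fin Nsum => z (j : Fin V) ^ (k : ℕ)))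
          = (fun k : Fin Nsum => Matrix.vandermonde w k) ∘ σ := by
        funext j
        funext k
        simp [Matrix.vandermonde, hwdef, σ]
      rw [heq]
      exact hcomp
    apply LinearIndependent.of_comp (LinearMap.funLeft ℂ ℂ e)
    have heq2 : (LinearMap.funLeft ℂ ℂ e) ∘
        (fun j : s => (khatriRao (S * Atx) Arx).transpose (j : Fin V))
        = fun j : s => (fun k : Fin Nsum => z (j : Fin V) ^ (k : ℕ)) := by
      funext j
      funext k
      simp only [Function.comp_apply, LinearMap.funLeft_apply, Matrix.transpose_apply]
      exact hBe k j
    rw [heq2]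
    exact hLIg
  -- the krank value
  have hkrank : krank (khatriRao (S * Atx) Arx) = Nsum := by
    unfold krank
    apply IsGreatest.csSup_eq
    constructor
    · exact ⟨by simpa using hV, key⟩
    · rintro r ⟨hr1, hr2⟩
      obtain ⟨s, _, hs⟩ := Finset.exists_subset_card_eq (s := (Finset.univ : Finset (Fin V)))
        (by simpa using hr1)
      have hLI := hr2 s hs
      have hLI2 : LinearIndependent ℂ
          (fun j : s => (fun k : Fin Nsum => z (j : Fin V) ^ (k : ℕ))) := by
        apply LinearIndependent.of_comp (LinearMap.funLeft ℂ ℂ g')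
        have heq3 : (LinearMap.funLeft ℂ ℂ g') ∘
            (fun j : s => (fun k : Fin Nsum => z (j : Fin V) ^ (k : ℕ)))
            = fun j : s => (khatriRao (S * Atx) Arx).transpose (j : Fin V) := by
          funext j
          funext p
          simp only [Function.comp_apply, LinearMap.funLeft_apply, Matrix.transpose_apply]
          exact (hBg p j).symm
        rw [heq3]
        exact hLI
      have hcle := hLI2.fintype_card_le_finrank
      rw [Module.finrank_pi] at hcle
      simpa [hs] using hcle
  refine ⟨2, by norm_num, S, hrank, ?_, hkrank⟩
  intro t n hn0 hnl
  simp only [hSdef, Matrix.of_apply]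
  rw [if_neg]
  intro h
  rw [h] at hn0 hnl
  fin_cases t <;> simp [hidxdef] at hn0 hnl
end

section
/- Consider the nonredundant nested array, i.e., the generalized nested array with Δ = N_rx, with pairwise distinct grid angles θ_1, …, θ_V ∈ [−π/2, π/2) and V ≥ N_tx·N_rx. Then for every waveform matrix S ∈ ℂ^{T×N_tx} with full column rank, rank(S) = N_tx, the sensing matrix B = (S·A_tx) ⊙ A_rx satisfies krank(B) = N_tx·N_rx. -/
open Matrix Real
open scoped Kronecker

section Krank

variable {m m' n : Type*} [Fintype m] [Fintype m'] [Fintype n]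

theorem krank_eq_of_injective {M : Matrix m n ℂ} {M' : Matrix m' n ℂ}
    (f : (m → ℂ) →ₗ[ℂ] (m' → ℂ)) (hf : Function.Injective f) (hcol : ∀ j, M'ᵀ j = f (Mᵀ j)) :
    krank M' = krank M := by
  have hcols : ∀ s : Finset n, (fun j : s => M'ᵀ j) = f ∘ fun j : s => Mᵀ j :=
    fun s => funext fun j => hcol j
  simp only [krank, hcols, f.linearIndependent_iff (LinearMap.ker_eq_bot.mpr hf)]

theorem krank_mul_of_mulVec_injective {L : Matrix m' m ℂ} (hL : Function.Injective L.mulVec)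
    (M : Matrix m n ℂ) : krank (L * M) = krank M :=
  krank_eq_of_injective L.mulVecLin hL fun j => by
    ext i; simp [mul_apply, mulVec, dotProduct]

theorem krank_submatrix_equiv (e : m' ≃ m) (M : Matrix m n ℂ) :
    krank (M.submatrix e id) = krank M :=
  krank_eq_of_injective (LinearEquiv.funCongrLeft ℂ ℂ e).toLinearMap
    (LinearEquiv.injective _) fun _ => rfl

theorem krank_eq_card_of_linearIndependent {M : Matrix m n ℂ}
    (hmn : Fintype.card m ≤ Fintype.card n)
    (hM : ∀ s : Finset n, s.card = Fintype.card m → LinearIndependent ℂ fun j : s => Mᵀ j) :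
    krank M = Fintype.card m := by
  refine IsGreatest.csSup_eq ⟨⟨hmn, hM⟩, fun r ⟨hr, hli⟩ => ?_⟩
  obtain ⟨s, -, hs⟩ := Finset.exists_subset_card_eq (s := Finset.univ) (n := r) hr
  simpa [hs] using (hli s hs).fintype_card_le_finrank

end Krank

theorem linearIndependent_powers_of_card_eq {K ι : Type*} [Field K] {z : ι → K}
    (hz : Function.Injective z) {k : ℕ} (s : Finset ι) (hs : s.card = k) :
    LinearIndependent K fun j : s => fun a : Fin k => z j ^ (a : ℕ) := by
  let e : Fin k ≃ s := (s.equivFinOfCardEq hs).symm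
  rw [← linearIndependent_equiv e]
  refine linearIndependent_rows_iff_isUnit.mpr <| (isUnit_iff_isUnit_det _).mpr <|
    Ne.isUnit <| det_vandermonde_ne_zero_iff.mpr ?_
  exact fun a b hab => e.injective <| Subtype.ext <| hz hab

theorem krank_powers {ι : Type*} [Fintype ι] {z : ι → ℂ} (hz : Function.Injective z) {k : ℕ}
    (hk : k ≤ Fintype.card ι) : krank (of fun (a : Fin k) i => z i ^ (a : ℕ)) = k := by
  simpa using krank_eq_card_of_linearIndependent (M := of fun (a : Fin k) i => z i ^ (a : ℕ))
    (by simpa using hk) fun s hs => linearIndependent_powers_of_card_eq hz s (by simpa using hs)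

theorem khatriRao_mul_left {t p q V : Type*} [Fintype p] [Fintype q] [DecidableEq q]
    (S : Matrix t p ℂ) (A : Matrix p V ℂ) (B : Matrix q V ℂ) :
    khatriRao (S * A) B = (S ⊗ₖ (1 : Matrix q q ℂ)) * khatriRao A B := by
  ext ⟨i, m⟩ v
  simp [khatriRao, mul_apply, Fintype.sum_prod_type, one_apply, Finset.sum_mul, mul_assoc]

namespace Matrix

theorem kronecker_one_mulVec_apply {t p q R : Type*} [Fintype p] [Fintype q] [DecidableEq q]
    [CommSemiring R] (S : Matrix t p R) (v : p × q → R) (i : t) (m : q) :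
    ((S ⊗ₖ (1 : Matrix q q R)) *ᵥ v) (i, m) = (S *ᵥ fun n => v (n, m)) i := by
  simp [mulVec, dotProduct, Fintype.sum_prod_type, one_apply]

theorem mulVec_kronecker_one_injective {t p q R : Type*} [Fintype p] [Fintype q] [DecidableEq q]
    [CommSemiring R] {S : Matrix t p R} (hS : Function.Injective S.mulVec) :
    Function.Injective (S ⊗ₖ (1 : Matrix q q R)).mulVec := by
  intro v w h
  ext ⟨n, m⟩
  have hm : S *ᵥ (fun n => v (n, m)) = S *ᵥ fun n => w (n, m) := by
    ext i; simpa only [kronecker_one_mulVec_apply] using congrFun h (i, m)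
  exact congrFun (hS hm) n

theorem mulVec_injective_of_rank_eq_card {t p K : Type*} [Fintype p] [Field K]
    {S : Matrix t p K} (hS : S.rank = Fintype.card p) : Function.Injective S.mulVec := by
  rw [mulVec_injective_iff, linearIndependent_iff_card_eq_finrank_span, ← hS,
    rank_eq_finrank_span_cols]
  rfl

end Matrix

theorem injOn_exp_pi_mul_sin :
    Set.InjOn (fun θ : ℝ => Complex.exp (Complex.I * π * sin θ)) (Set.Ico (-(π / 2)) (π / 2)) := by
  have hsin : ∀ θ ∈ Set.Ico (-(π / 2)) (π / 2), π * sin θ ∈ Set.Ico (-π) π := by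
    rintro θ ⟨hlo, hhi⟩
    have hlt : sin θ < 1 := by
      simpa using strictMonoOn_sin ⟨hlo, hhi.le⟩ ⟨by linarith [pi_pos], le_rfl⟩ hhi
    constructor <;> nlinarith [neg_one_le_sin θ, pi_pos]
  intro θ hθ θ' hθ' h
  have hexp : Circle.exp (π * sin θ) = Circle.exp (π * sin θ') := by
    ext; simpa [Circle.coe_exp, mul_comm, mul_left_comm] using h
  have := Circle.exp_injOn_Ico (by linarith) (hsin θ hθ) (hsin θ' hθ') hexp
  exact injOn_sin (Set.Ico_subset_Icc_self hθ) (Set.Ico_subset_Icc_self hθ')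
    (mul_left_cancel₀ pi_ne_zero this)

theorem stmt_16_general (Ntx Nrx V : ℕ)
    (dtx : Fin Ntx → ℤ) (hdtx : ∀ n, dtx n = (n : ℤ) * Nrx)
    (drx : Fin Nrx → ℤ) (hdrx : ∀ m, drx m = (m : ℤ))
    (θ : Fin V → ℝ) (hθinj : Function.Injective θ)
    (hθrange : ∀ i, θ i ∈ Set.Ico (-(Real.pi / 2)) (Real.pi / 2))
    (hV : Ntx * Nrx ≤ V)
    (Atx : Matrix (Fin Ntx) (Fin V) ℂ)
    (hAtx : ∀ n i, Atx n i =
      Complex.exp (Complex.I * Real.pi * (dtx n : ℂ) * (Real.sin (θ i) : ℂ)))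
    (Arx : Matrix (Fin Nrx) (Fin V) ℂ)
    (hArx : ∀ m i, Arx m i =
      Complex.exp (Complex.I * Real.pi * (drx m : ℂ) * (Real.sin (θ i) : ℂ))) :
    ∀ (T : ℕ) (S : Matrix (Fin T) (Fin Ntx) ℂ), S.rank = Ntx →
      krank (khatriRao (S * Atx) Arx) = Ntx * Nrx := by
  intro T S hS
  set z : Fin V → ℂ := fun i => Complex.exp (Complex.I * π * sin (θ i))
  have hz : Function.Injective z := fun i j h =>
    hθinj (injOn_exp_pi_mul_sin (hθrange i) (hθrange j) h)
  have hexp (k : ℕ) (i : Fin V) :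
      Complex.exp (Complex.I * π * (k : ℂ) * sin (θ i)) = z i ^ k := by
    rw [← Complex.exp_nat_mul]; ring_nf
  have hvirtual : khatriRao Atx Arx =
      (of fun (a : Fin (Ntx * Nrx)) i => z i ^ (a : ℕ)).submatrix finProdFinEquiv id := by
    ext ⟨n, m⟩ i
    simp only [khatriRao, of_apply, submatrix_apply, id, finProdFinEquiv_apply_val, hAtx, hArx,
      hdtx, hdrx]
    rw [pow_add, ← hexp, ← hexp, mul_comm]
    push_cast
    ring_nf
  rw [khatriRao_mul_left, krank_mul_of_mulVec_injective
      (mulVec_kronecker_one_injective (mulVec_injective_of_rank_eq_card (by simpa using hS))),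
    hvirtual, krank_submatrix_equiv, krank_powers hz (by simpa using hV)]

/-- for the nonredundant nested array (GNA with `Δ = N_rx`) and any
full-column-rank waveform matrix `S` (`rank S = N_tx`), the sensing matrix achieves
`krank B = N_tx·N_rx`. -/
theorem stmt_16 (Ntx Nrx V : ℕ)
    (hNtx : 0 < Ntx) (hNrx : 0 < Nrx)
    (dtx : Fin Ntx → ℤ) (hdtx : ∀ n, dtx n = (n : ℤ) * Nrx)
    (drx : Fin Nrx → ℤ) (hdrx : ∀ m, drx m = (m : ℤ))
    (θ : Fin V → ℝ) (hθinj : Function.Injective θ)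
    (hθrange : ∀ i, θ i ∈ Set.Ico (-(Real.pi / 2)) (Real.pi / 2))
    (hV : Ntx * Nrx ≤ V)
    (Atx : Matrix (Fin Ntx) (Fin V) ℂ)
    (hAtx : ∀ n i, Atx n i =
      Complex.exp (Complex.I * Real.pi * (dtx n : ℂ) * (Real.sin (θ i) : ℂ)))
    (Arx : Matrix (Fin Nrx) (Fin V) ℂ)
    (hArx : ∀ m i, Arx m i =
      Complex.exp (Complex.I * Real.pi * (drx m : ℂ) * (Real.sin (θ i) : ℂ))) :
    ∀ (T : ℕ) (S : Matrix (Fin T) (Fin Ntx) ℂ), S.rank = Ntx →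
      krank (khatriRao (S * Atx) Arx) = Ntx * Nrx :=
  stmt_16_general Ntx Nrx V dtx hdtx drx hdrx θ hθinj hθrange hV Atx hAtx Arx hArx
end

section
/- Fix integers N_tx, N_rx ≥ 1 and Δ with 1 ≤ Δ ≤ N_rx and N_rx/Δ ∈ ℕ, let N_Σ = N_rx + (N_tx−1)Δ, and let N_s ∈ ℕ_+ satisfy N_s·N_rx ≤ N_Σ. Let Υ be the redundancy pattern of the generalized nested array with spacing Δ. Define Z ∈ ℂ^{N_s×N_tx} columnwise: the n-th column of Z equals the standard basis vector e_{1+(n−1)Δ/N_rx} ∈ ℂ^{N_s} if N_rx divides (n−1)Δ and 1 + (n−1)Δ/N_rx ≤ N_s, and equals the zero vector otherwise. Then (Z ⊗ I_{N_rx})·Υ = [I_{N_s·N_rx} 0_{N_s·N_rx × (N_Σ − N_s·N_rx)}], a row-selection matrix, and rank(Z) = N_s. -/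
open scoped Kronecker

private lemma mono_gap {N : ℕ} (f : Fin N → ℤ) (hf : StrictMono f) :
    ∀ (d i : ℕ) (h : i + d < N), f ⟨i, by omega⟩ + d ≤ f ⟨i + d, h⟩ := by
  intro d
  induction d with
  | zero => intro i h; simp
  | succ d ih =>
      intro i h
      have h1 := ih i (by omega)
      have h2 : f ⟨i + d, by omega⟩ < f ⟨i + d + 1, by omega⟩ := by
        apply hf; simp [Fin.lt_def]
      have he : (⟨i + (d + 1), h⟩ : Fin N) = ⟨i + d + 1, by omega⟩ := rfl
      rw [he]
      push_cast
      push_cast at h1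
      omega

private lemma mul3 {a b c : Prop} [Decidable a] [Decidable b] [Decidable c] :
    ((if a then (1:ℂ) else 0) * (if b then (1:ℂ) else 0) * (if c then (1:ℂ) else 0)) =
      if a ∧ b ∧ c then 1 else 0 := by
  split_ifs <;> simp_all

/-- for the GNA with spacing `Δ` (`1 ≤ Δ ≤ N_rx`, `Δ ∣ N_rx`),
`N_Σ = N_rx + (N_tx−1)Δ` and `N_s·N_rx ≤ N_Σ`, the matrix `Z` whose `n`-th column is
`e_{1+(n−1)Δ/N_rx}` when `N_rx ∣ (n−1)Δ` and `(n−1)Δ/N_rx < N_s`, and zero otherwise,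
satisfies `(Z ⊗ I_{N_rx})·Υ = [I_{N_s·N_rx}  0]` (a row-selection matrix) and
`rank Z = N_s`. -/
theorem stmt_17 (Ntx Nrx Δ Nsum Ns : ℕ)
    (hNtx : 0 < Ntx) (hNrx : 0 < Nrx) (hΔ1 : 1 ≤ Δ) (hΔ2 : Δ ≤ Nrx) (hΔdvd : Δ ∣ Nrx)
    (hNsum : Nsum = Nrx + (Ntx - 1) * Δ)
    (hNs : 1 ≤ Ns) (hWR : Ns * Nrx ≤ Nsum)
    (dtx : Fin Ntx → ℤ) (hdtx : ∀ n, dtx n = (n : ℤ) * Δ)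
    (drx : Fin Nrx → ℤ) (hdrx : ∀ m, drx m = (m : ℤ))
    (dSig : Fin Nsum → ℤ) (hdSigMono : StrictMono dSig)
    (hdSigrange : ∀ z : ℤ, (∃ ℓ, dSig ℓ = z) ↔ ∃ n m, dtx n + drx m = z)
    (Υ : Matrix (Fin Ntx × Fin Nrx) (Fin Nsum) ℂ)
    (hΥ : ∀ n m ℓ, Υ (n, m) ℓ = if dtx n + drx m = dSig ℓ then 1 else 0)
    (Z : Matrix (Fin Ns) (Fin Ntx) ℂ)
    (hZ : ∀ (k : Fin Ns) (n : Fin Ntx),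
      Z k n = if Nrx ∣ (n : ℕ) * Δ ∧ (n : ℕ) * Δ / Nrx = (k : ℕ) then 1 else 0) :
    (Z ⊗ₖ (1 : Matrix (Fin Nrx) (Fin Nrx) ℂ)) * Υ =
        Matrix.of (fun (km : Fin Ns × Fin Nrx) (ℓ : Fin Nsum) =>
          if (ℓ : ℕ) = (km.1 : ℕ) * Nrx + (km.2 : ℕ) then 1 else 0) ∧
      Z.rank = Ns := by
  obtain ⟨c, hc⟩ := hΔdvd
  have hc1 : 1 ≤ c := by nlinarith
  -- range of dSig is within [0, Nsum)
  have hbound : ∀ ℓ : Fin Nsum, 0 ≤ dSig ℓ ∧ dSig ℓ < Nsum := by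
    intro ℓ
    obtain ⟨n, m, hnm⟩ := (hdSigrange (dSig ℓ)).mp ⟨ℓ, rfl⟩
    rw [hdtx, hdrx] at hnm
    have hm : (m : ℕ) < Nrx := m.isLt
    have hle : (n : ℕ) * Δ + (m : ℕ) < Nsum := by
      have h1 : (n : ℕ) * Δ ≤ (Ntx - 1) * Δ := Nat.mul_le_mul_right _ (by omega)
      omega
    constructor
    · rw [← hnm]; positivity
    · rw [← hnm]; exact_mod_cast hle
  -- dSig ℓ = ℓ
  have hid : ∀ ℓ : Fin Nsum, dSig ℓ = (ℓ : ℤ) := by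
    have hNsum0 : 0 < Nsum := by omega
    have hlow : ∀ ℓ : Fin Nsum, (ℓ : ℤ) ≤ dSig ℓ := by
      intro ℓ
      have hmg := mono_gap dSig hdSigMono ℓ 0 (by omega)
      have he : (⟨0 + (ℓ : ℕ), by omega⟩ : Fin Nsum) = ℓ := by ext; simp
      rw [he] at hmg
      have h0 := (hbound ⟨0, hNsum0⟩).1
      calc (ℓ : ℤ) ≤ dSig ⟨0, hNsum0⟩ + (ℓ : ℕ) := le_add_of_nonneg_left h0
        _ ≤ dSig ℓ := hmg
    intro ℓ
    have h1 := hlow ℓ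
    have hℓ : (ℓ : ℕ) < Nsum := ℓ.isLt
    have h2 := mono_gap dSig hdSigMono (Nsum - 1 - ℓ) ℓ (by omega)
    have he : (⟨(ℓ : ℕ) + (Nsum - 1 - (ℓ : ℕ)), by omega⟩ : Fin Nsum) =
        ⟨Nsum - 1, by omega⟩ := by ext; simp; omega
    rw [he] at h2
    have htop : dSig ⟨Nsum - 1, by omega⟩ < Nsum := (hbound _).2
    have h3 : dSig ⟨(ℓ : ℕ), by omega⟩ + ((Nsum - 1 - (ℓ : ℕ) : ℕ) : ℤ) < Nsum :=
      lt_of_le_of_lt h2 htop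
    have he2 : (⟨(ℓ : ℕ), by omega⟩ : Fin Nsum) = ℓ := by ext; simp
    rw [he2] at h3
    omega
  -- k*c < Ntx
  have hn0lt : ∀ k : Fin Ns, (k : ℕ) * c < Ntx := by
    intro k
    have hk : (k : ℕ) ≤ Ns - 1 := by omega
    have h1 : (k : ℕ) * Nrx ≤ (Ns - 1) * Nrx := Nat.mul_le_mul_right _ hk
    have h2 : (Ns - 1) * Nrx + Nrx = Ns * Nrx := by
      cases Ns with
      | zero => omega
      | succ t => simp [Nat.succ_mul]
    have h3 : (k : ℕ) * Nrx ≤ (Ntx - 1) * Δ := by omega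
    have h4 : (k : ℕ) * c * Δ ≤ (Ntx - 1) * Δ := by
      calc (k : ℕ) * c * Δ = (k : ℕ) * (Δ * c) := by ring
      _ = (k : ℕ) * Nrx := by rw [← hc]
      _ ≤ (Ntx - 1) * Δ := h3
    have h5 : (k : ℕ) * c ≤ Ntx - 1 := Nat.le_of_mul_le_mul_right h4 (by omega)
    omega
  -- key condition equivalence
  have hcond : ∀ (k : Fin Ns) (n : Fin Ntx),
      (Nrx ∣ (n : ℕ) * Δ ∧ (n : ℕ) * Δ / Nrx = (k : ℕ)) ↔ (n : ℕ) = (k : ℕ) * c := by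
    intro k n
    constructor
    · rintro ⟨hdvd, hdiv⟩
      have h1 : (n : ℕ) * Δ = (k : ℕ) * Nrx := by
        rw [← hdiv, Nat.div_mul_cancel hdvd]
      have h2 : (n : ℕ) * Δ = (k : ℕ) * c * Δ := by
        rw [h1, hc]; ring
      exact Nat.eq_of_mul_eq_mul_right (by omega) h2
    · intro h
      have hmul : (n : ℕ) * Δ = (k : ℕ) * Nrx := by rw [h, hc]; ring
      exact ⟨by rw [hmul]; exact Dvd.dvd.mul_left dvd_rfl _,
        by rw [hmul, Nat.mul_div_cancel _ hNrx]⟩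
  constructor
  · -- matrix identity
    ext ⟨k, m⟩ ℓ
    rw [Matrix.mul_apply, Fintype.sum_prod_type]
    have hterm : ∀ (n : Fin Ntx) (m' : Fin Nrx),
        (Z ⊗ₖ (1 : Matrix (Fin Nrx) (Fin Nrx) ℂ)) (k, m) (n, m') * Υ (n, m') ℓ =
          if (n = (⟨(k : ℕ) * c, hn0lt k⟩ : Fin Ntx) ∧ m' = m ∧
              (ℓ : ℕ) = (k : ℕ) * Nrx + (m : ℕ)) then 1 else 0 := by
      intro n m'
      rw [Matrix.kroneckerMap_apply, hΥ, hZ, hdtx, hdrx, hid ℓ, Matrix.one_apply, mul3]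
      refine if_congr ?_ rfl rfl
      have hcΔ : (k : ℕ) * c * Δ = (k : ℕ) * Nrx := by rw [hc]; ring
      constructor
      · rintro ⟨h1, h2, h3⟩
        have h2' : m = m' := h2
        have e1 : (n : ℕ) = (k : ℕ) * c := (hcond k n).mp h1
        have e3 : (n : ℕ) * Δ + (m' : ℕ) = (ℓ : ℕ) := by exact_mod_cast h3
        exact ⟨Fin.ext e1, h2'.symm, by rw [← e3, e1, hcΔ, ← h2']⟩
      · rintro ⟨h1, h2, h3⟩
        have e1 : (n : ℕ) = (k : ℕ) * c := by rw [h1]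
        refine ⟨(hcond k n).mpr e1, h2.symm, ?_⟩
        have e3 : (n : ℕ) * Δ + (m' : ℕ) = (ℓ : ℕ) := by rw [e1, hcΔ, h2, h3]
        exact_mod_cast congrArg (Nat.cast : ℕ → ℤ) e3
    rw [Finset.sum_congr rfl fun n _ => Finset.sum_congr rfl fun m' _ => hterm n m']
    have key : ∀ (P : Prop) [Decidable P] (n₀ : Fin Ntx),
        (∑ n : Fin Ntx, ∑ m' : Fin Nrx, if (n = n₀ ∧ m' = m ∧ P) then (1:ℂ) else 0) =
          if P then 1 else 0 := by
      intro P _ n₀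
      rw [Finset.sum_eq_single n₀]
      · rw [Finset.sum_eq_single m]
        · simp
        · intro b _ hb; simp [hb]
        · intro h; exact absurd (Finset.mem_univ _) h
      · intro b _ hb; simp [hb]
      · intro h; exact absurd (Finset.mem_univ _) h
    simp only [Matrix.of_apply]
    exact key _ _
  · -- rank
    have hZZt : Z * Z.transpose = 1 := by
      ext k k'
      rw [Matrix.mul_apply]
      simp only [Matrix.transpose_apply, hZ]
      by_cases hkk : k = k'
      · subst hkk
        rw [Finset.sum_eq_single (⟨(k : ℕ) * c, hn0lt k⟩ : Fin Ntx)]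
        · rw [if_pos ((hcond k _).mpr rfl), Matrix.one_apply_eq]; norm_num
        · intro b _ hb
          rw [if_neg, zero_mul]
          intro ha
          exact hb (Fin.ext ((hcond k b).mp ha))
        · intro habs; exact absurd (Finset.mem_univ _) habs
      · rw [Matrix.one_apply_ne hkk]
        apply Finset.sum_eq_zero
        intro n _
        by_cases h1 : Nrx ∣ (n : ℕ) * Δ ∧ (n : ℕ) * Δ / Nrx = (k : ℕ)
        · have h2 : ¬(Nrx ∣ (n : ℕ) * Δ ∧ (n : ℕ) * Δ / Nrx = (k' : ℕ)) := by
            intro h2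
            have e1 := (hcond k n).mp h1
            have e2 := (hcond k' n).mp h2
            apply hkk
            have h3 : (k : ℕ) * c = (k' : ℕ) * c := by omega
            exact Fin.ext (Nat.eq_of_mul_eq_mul_right (by omega) h3)
          rw [if_neg h2, mul_zero]
        · rw [if_neg h1, zero_mul]
    have h1 : Z.rank ≤ Ns := by
      have := Matrix.rank_le_card_height Z
      simpa using this
    have h2 : Ns ≤ Z.rank := by
      have := Matrix.rank_mul_le_left Z Z.transpose
      rw [hZZt, Matrix.rank_one] at this
      simpa using this
    omega
end
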